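/- The braid group B_3 is isomorphic to the universal central extension data given by ⟨a, b | a² = b³⟩; i.e., B_3 has presentation ⟨a, b | a² = b³⟩ via a = σ1σ2σ1, b = σ1σ2. -/

import Mathlib

/-!
The two presentations are related by the change of generators `a = σ₁σ₂σ₁`, `b = σ₁σ₂`,
with inverse `σ₁ = b⁻¹a`, `σ₂ = a⁻¹b²`. The braid relation makes
`a² = σ₁σ₂σ₁ · σ₂σ₁σ₂ = (σ₁σ₂)³ = b³`, and conversely, when `a² = b³`, both sides of the braid
relation for `b⁻¹a` and `a⁻¹b²` reduce to `a`. The two resulting homomorphisms are mutually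
inverse since they are so on generators, which is a free-group computation.
-/

/-- The braid relation for `B₃ = ⟨σ1, σ2 | σ1σ2σ1 = σ2σ1σ2⟩`. -/
def braidRel3 : Set (FreeGroup (Fin 2)) :=
  {FreeGroup.of 0 * FreeGroup.of 1 * FreeGroup.of 0 *
    (FreeGroup.of 1 * FreeGroup.of 0 * FreeGroup.of 1)⁻¹}

/-- The braid group on 3 strands. -/
def B3 : Type := PresentedGroup braidRel3

noncomputable instance : Group B3 := by unfold B3; infer_instance

/-- `σ1`, `σ2` in `B₃`. -/
noncomputable def sigma1 : B3 := PresentedGroup.of 0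
noncomputable def sigma2 : B3 := PresentedGroup.of 1


/-- The relation `a² = b³` on two generators. -/
def torusRel : Set (FreeGroup (Fin 2)) :=
  {FreeGroup.of 0 ^ 2 * (FreeGroup.of 1 ^ 3)⁻¹}

section GroupIdentities

variable {G : Type*} [Group G]

theorem sq_eq_pow_three_of_braid {x y : G} (h : x * y * x = y * x * y) :
    (x * y * x) ^ 2 = (x * y) ^ 3 :=
  calc (x * y * x) ^ 2 = x * y * x * (x * y * x) := sq _
    _ = x * y * x * (y * x * y) := by rw [h]
    _ = (x * y) ^ 3 := by simp only [pow_succ, pow_zero, one_mul, mul_assoc]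

theorem braid_of_sq_eq_pow_three {a b : G} (h : a ^ 2 = b ^ 3) :
    b⁻¹ * a * (a⁻¹ * b ^ 2) * (b⁻¹ * a) = a⁻¹ * b ^ 2 * (b⁻¹ * a) * (a⁻¹ * b ^ 2) :=
  calc b⁻¹ * a * (a⁻¹ * b ^ 2) * (b⁻¹ * a) = a⁻¹ * a ^ 2 := by group
    _ = a⁻¹ * b ^ 3 := by rw [h]
    _ = a⁻¹ * b ^ 2 * (b⁻¹ * a) * (a⁻¹ * b ^ 2) := by group

end GroupIdentities

namespace B3

variable {G : Type*} [Group G]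

theorem braid : sigma1 * sigma2 * sigma1 = sigma2 * sigma1 * sigma2 :=
  mul_inv_eq_one.mp (PresentedGroup.one_of_mem (rels := braidRel3) rfl)

noncomputable def lift {x y : G} (h : x * y * x = y * x * y) : B3 →* G :=
  PresentedGroup.toGroup (f := ![x, y]) (rels := braidRel3) <| by
    rintro r rfl
    simp [h]

@[simp]
theorem lift_sigma1 {x y : G} (h : x * y * x = y * x * y) : lift h sigma1 = x :=
  PresentedGroup.toGroup.of _

@[simp]
theorem lift_sigma2 {x y : G} (h : x * y * x = y * x * y) : lift h sigma2 = y :=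
  PresentedGroup.toGroup.of _

theorem hom_ext {φ ψ : B3 →* G} (h₁ : φ sigma1 = ψ sigma1) (h₂ : φ sigma2 = ψ sigma2) :
    φ = ψ :=
  PresentedGroup.ext (rels := braidRel3) fun i => by fin_cases i <;> assumption

end B3

namespace torusRel

variable {G : Type*} [Group G]

theorem sq_eq_pow_three :
    (PresentedGroup.of 0 : PresentedGroup torusRel) ^ 2 = PresentedGroup.of 1 ^ 3 :=
  mul_inv_eq_one.mp (PresentedGroup.one_of_mem (rels := torusRel) rfl)

noncomputable def lift {a b : G} (h : a ^ 2 = b ^ 3) : PresentedGroup torusRel →* G :=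
  PresentedGroup.toGroup (f := ![a, b]) (rels := torusRel) <| by
    rintro r rfl
    simp [h]

@[simp]
theorem lift_of_zero {a b : G} (h : a ^ 2 = b ^ 3) : lift h (PresentedGroup.of 0) = a :=
  PresentedGroup.toGroup.of _

@[simp]
theorem lift_of_one {a b : G} (h : a ^ 2 = b ^ 3) : lift h (PresentedGroup.of 1) = b :=
  PresentedGroup.toGroup.of _

theorem hom_ext {φ ψ : PresentedGroup torusRel →* G}
    (h₀ : φ (.of 0) = ψ (.of 0)) (h₁ : φ (.of 1) = ψ (.of 1)) : φ = ψ :=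
  PresentedGroup.ext fun i => by fin_cases i <;> assumption

end torusRel

/-- `B₃` has the presentation `⟨a, b | a² = b³⟩` via `a = σ1σ2σ1`,
`b = σ1σ2`. -/
theorem B3_iso_torusKnotGroup :
    ∃ e : B3 ≃* PresentedGroup torusRel,
      e (sigma1 * sigma2 * sigma1) = PresentedGroup.of 0 ∧
      e (sigma1 * sigma2) = PresentedGroup.of 1 := by
  let toTorus := B3.lift (braid_of_sq_eq_pow_three torusRel.sq_eq_pow_three)
  let ofTorus := torusRel.lift (sq_eq_pow_three_of_braid B3.braid)
  have to_a : toTorus (sigma1 * sigma2 * sigma1) = .of 0 := by simp [toTorus]; group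
  have to_b : toTorus (sigma1 * sigma2) = .of 1 := by simp [toTorus]; group
  have left_inv : ofTorus.comp toTorus = .id B3 :=
    B3.hom_ext (by simp [toTorus, ofTorus]; group) (by simp [toTorus, ofTorus, sq]; group)
  have right_inv : toTorus.comp ofTorus = .id _ :=
    torusRel.hom_ext (by simpa [ofTorus] using to_a) (by simpa [ofTorus] using to_b)
  exact ⟨toTorus.toMulEquiv ofTorus left_inv right_inv, to_a, to_b⟩
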